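/- Let A be a finite dimensional C*-algebra and E a Hilbert A-module that is not finitely generated. Then every nonzero compact operator K ∈ K(E) has a proper nonzero hyperinvariant closed submodule, i.e., a closed submodule W with {0} ≠ W ≠ E such that S(W) ⊆ W for every S ∈ L(E) commuting with K. -/

import Mathlib

/-!
Write `W x` for the closure of `{T x | T K = K T}`, `T` running over all bounded operators
commuting with `K`. It contains `x` and is invariant under every operator commuting with `K`;
since `K` is `A`-linear, right multiplications by elements of `A` are among those operators, so
`W x` is a closed `A`-submodule. It remains to find `x ≠ 0` with `W x ≠ E`, a Lomonosov-type
statement about Banach spaces: as `A` is finite dimensional, `K` is compact in the Banach-space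
sense, and `E` is infinite dimensional.

Suppose `W x = E` for all `x ≠ 0`. An eigenvalue `μ ≠ 0` of `K` would have a closed eigenspace
invariant under the commutant, forcing `K = μ`, which is not compact; by the Fredholm alternative
`K` is therefore quasinilpotent. Hilden's argument now applies: take a ball `B = B̄(x₀, r)` with
`0 ∉ B` such that the compact set `Q = closure (K B)` also misses `0`. By density and compactness,
finitely many operators commuting with `K` bring every point of `Q` back into `B`. Iterating gives
`Φₙ` commuting with `K` with `‖Φₙ‖ ≤ Mⁿ` and `Φₙ (Kⁿ x₀) ∈ B`, whence
`0 < ‖x₀‖ - r ≤ Mⁿ ‖Kⁿ‖ ‖x₀‖`, which tends to `0` by Gelfand's formula.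
-/

open scoped RightActions

/-- The Hilbert C⋆-module class as it stood in Mathlib of December 2024 (right `A`-action
via `Aᵐᵒᵖ`); Mathlib's `CStarModule` now uses a left action. -/
class CStarModuleOld (A E : Type*) [NonUnitalSemiring A] [StarRing A] [Module ℂ A]
    [AddCommGroup E] [Module ℂ E] [PartialOrder A] [SMul Aᵐᵒᵖ E] [Norm A] [Norm E]
    extends Inner A E where
  inner_add_right {x} {y} {z} : inner x (y + z) = inner x y + inner x z
  inner_self_nonneg {x} : 0 ≤ inner x x
  inner_self {x} : inner x x = 0 ↔ x = 0
  inner_op_smul_right {a : A} {x y : E} : inner x (y <• a) = inner x y * a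
  inner_smul_right_complex {z : ℂ} {x} {y} : inner x (z • y) = z • inner x y
  star_inner x y : star (inner x y) = inner y x
  norm_eq_sqrt_norm_inner_self x : ‖x‖ = √‖inner x x‖

section

variable {A : Type*} [CStarAlgebra A] [PartialOrder A] [StarOrderedRing A]
variable {E : Type*} [NormedAddCommGroup E] [NormedSpace ℂ E] [SMul Aᵐᵒᵖ E]
  [CStarModuleOld A E] [CompleteSpace E]

local notation "⟪" x ", " y "⟫" => inner (𝕜 := A) x y

/-- `T` is a bounded adjointable `A`-linear operator with adjoint `T'`. -/
def IsAdjointableWith (T T' : E →L[ℂ] E) : Prop :=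
  (∀ (a : A) (x : E), T (x <• a) = T x <• a) ∧
  ∀ x y : E, ⟪T x, y⟫ = ⟪x, T' y⟫

/-- The orthogonal complement of a subset of a Hilbert C*-module. -/
def ortho (W : Set E) : Set E := {y | ∀ x ∈ W, ⟪x, y⟫ = (0 : A)}

/-- `W` is orthogonally complemented in `E`. -/
def OrthoComplemented (W : Set E) : Prop :=
  ∀ z : E, ∃ x ∈ W, ∃ y ∈ ortho (A := A) W, z = x + y

/-- `W` is a closed `A`-submodule of `E`. -/
def IsClosedSubmodule (W : Submodule ℂ E) : Prop :=
  IsClosed (W : Set E) ∧ ∀ (a : A), ∀ x ∈ W, x <• a ∈ W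

/-- An orthogonal projection in `L(E)`: an `A`-linear, idempotent, self-adjoint operator. -/
def IsOrthoProjection (P : E →L[ℂ] E) : Prop :=
  (∀ (a : A) (x : E), P (x <• a) = P x <• a) ∧ P.comp P = P ∧
  ∀ x y : E, ⟪P x, y⟫ = ⟪x, P y⟫

/-- A "compact" operator on a Hilbert C*-module: a member of the closure of the span
of the rank-one operators `z ↦ x ⟨y, z⟩`. -/
def IsCompactOp (K : E →L[ℂ] E) : Prop :=
  K ∈ closure (Submodule.span ℂ
    {S : E →L[ℂ] E | ∃ x y : E, ∀ z : E, S z = x <• ⟪y, z⟫} : Set (E →L[ℂ] E))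

/-- `E` is a finitely generated Hilbert `A`-module. -/
def IsFinGen : Prop :=
  ∃ (n : ℕ) (g : Fin n → E), ∀ x : E,
    x ∈ Submodule.span ℂ {y : E | ∃ (i : Fin n) (a : A), y = g i <• a}

/-- `T` is invertible in `L(E)`, the bounded adjointable operators. -/
def InvertibleInL (T : E →L[ℂ] E) : Prop :=
  ∃ S S' : E →L[ℂ] E, IsAdjointableWith (A := A) S S' ∧ S.comp T = 1 ∧ T.comp S = 1

end

section OrbitClosure

variable {𝕜 X : Type*} [NontriviallyNormedField 𝕜] [NormedAddCommGroup X] [NormedSpace 𝕜 X]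

namespace Subalgebra

/-- The closure of the orbit `{T x | T ∈ 𝒜}`. -/
noncomputable def orbitClosure (𝒜 : Subalgebra 𝕜 (X →L[𝕜] X)) (x : X) : Submodule 𝕜 X :=
  (𝒜.toSubmodule.map (ContinuousLinearMap.apply 𝕜 X x : (X →L[𝕜] X) →ₗ[𝕜] X)).topologicalClosure

variable {𝒜 : Subalgebra 𝕜 (X →L[𝕜] X)}

lemma apply_mem_orbitClosure {T : X →L[𝕜] X} (hT : T ∈ 𝒜) (x : X) : T x ∈ 𝒜.orbitClosure x :=
  Submodule.le_topologicalClosure _ ⟨T, hT, rfl⟩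

lemma mem_orbitClosure_self (x : X) : x ∈ 𝒜.orbitClosure x :=
  apply_mem_orbitClosure 𝒜.one_mem x

lemma isClosed_orbitClosure (x : X) : IsClosed (𝒜.orbitClosure x : Set X) :=
  Submodule.isClosed_topologicalClosure _

lemma map_mem_orbitClosure {T : X →L[𝕜] X} (hT : T ∈ 𝒜) {x w : X} (hw : w ∈ 𝒜.orbitClosure x) :
    T w ∈ 𝒜.orbitClosure x := by
  refine map_mem_closure T.continuous hw ?_
  rintro _ ⟨S, hS, rfl⟩
  exact Submodule.mem_map.2 ⟨T * S, 𝒜.mul_mem hT hS, rfl⟩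

lemma orbitClosure_le {V : Submodule 𝕜 X} (hV : IsClosed (V : Set X))
    (hinv : ∀ T ∈ 𝒜, ∀ v ∈ V, T v ∈ V) {x : X} (hx : x ∈ V) : 𝒜.orbitClosure x ≤ V :=
  Submodule.topologicalClosure_minimal _ (by rintro _ ⟨T, hT, rfl⟩; exact hinv T hT x hx) hV

lemma exists_dist_lt_of_orbitClosure_eq_top {x : X} (h : 𝒜.orbitClosure x = ⊤) (z : X)
    {ε : ℝ} (hε : 0 < ε) : ∃ T ∈ 𝒜, dist (T x) z < ε := by
  have hz : z ∈ 𝒜.orbitClosure x := h ▸ Submodule.mem_top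
  obtain ⟨_, ⟨T, hT, rfl⟩, hd⟩ := Metric.mem_closure_iff.1 hz ε hε
  exact ⟨T, hT, by rw [dist_comm]; exact hd⟩

end Subalgebra

lemma ContinuousLinearMap.eq_smul_one_of_orbitClosure_centralizer_eq_top {K : X →L[𝕜] X}
    {μ : 𝕜} {v : X} (hv : K v = μ • v) (h : (Subalgebra.centralizer 𝕜 {K}).orbitClosure v = ⊤) :
    K = μ • 1 := by
  set V := ((K - μ • 1 : X →L[𝕜] X) : X →ₗ[𝕜] X).ker
  have hinv : ∀ T ∈ Subalgebra.centralizer 𝕜 {K}, ∀ w ∈ V, T w ∈ V := by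
    intro T hT w hw
    have hKT : Commute (K - μ • 1) T :=
      Commute.sub_left ((Subalgebra.mem_centralizer_iff 𝕜).1 hT K rfl)
        ((Commute.one_left T).smul_left μ)
    rw [LinearMap.mem_ker] at hw ⊢
    calc (K - μ • 1) (T w) = T ((K - μ • 1) w) := DFunLike.congr_fun hKT.eq w
      _ = 0 := by rw [ContinuousLinearMap.coe_coe] at hw; rw [hw, map_zero]
  have hle : ⊤ ≤ V := h ▸ Subalgebra.orbitClosure_le
    (K - μ • 1 : X →L[𝕜] X).isClosed_ker hinv (by simp [hv])
  ext w
  simpa [V, sub_eq_zero] using hle (Submodule.mem_top (x := w))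

lemma exists_mem_centralizer_norm_le_pow_apply_pow_mem {K : X →L[𝕜] X}
    {S : Set (X →L[𝕜] X)} (hS : S ⊆ Set.centralizer {K}) {M : ℝ} (hM : ∀ T ∈ S, ‖T‖ ≤ M)
    {B : Set X} (hB : ∀ b ∈ B, ∃ T ∈ S, T (K b) ∈ B) {x₀ : X} (hx₀ : x₀ ∈ B) (n : ℕ) :
    ∃ Φ ∈ Set.centralizer {K}, ‖Φ‖ ≤ M ^ n ∧ Φ ((K ^ n) x₀) ∈ B := by
  induction n with
  | zero =>
    exact ⟨1, Set.one_mem_centralizer, by rw [pow_zero]; exact ContinuousLinearMap.norm_id_le,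
      hx₀⟩
  | succ n ih =>
    obtain ⟨Φ, hΦ, hΦM, hΦB⟩ := ih
    obtain ⟨T, hTS, hTB⟩ := hB _ hΦB
    have hΦK : Φ (K ((K ^ n) x₀)) = K (Φ ((K ^ n) x₀)) :=
      DFunLike.congr_fun (Set.mem_centralizer_iff.1 hΦ K rfl).symm _
    refine ⟨T * Φ, Set.mul_mem_centralizer (hS hTS) hΦ, ?_, ?_⟩
    · calc ‖T * Φ‖ ≤ ‖T‖ * ‖Φ‖ := norm_mul_le _ _
        _ ≤ M * M ^ n :=
          mul_le_mul (hM T hTS) hΦM (norm_nonneg _) ((norm_nonneg _).trans (hM T hTS))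
        _ = M ^ (n + 1) := (pow_succ' M n).symm
    · rw [pow_succ']
      change T (Φ (K ((K ^ n) x₀))) ∈ B
      rwa [hΦK]

end OrbitClosure

lemma ContinuousLinearMap.isCompactOperator_of_forall_apply_mem {𝕜 X Y : Type*}
    [NontriviallyNormedField 𝕜] [ProperSpace 𝕜]
    [NormedAddCommGroup X] [NormedSpace 𝕜 X] [NormedAddCommGroup Y] [NormedSpace 𝕜 Y]
    (T : X →L[𝕜] Y) (V : Submodule 𝕜 Y) [FiniteDimensional 𝕜 V] (hT : ∀ x, T x ∈ V) :
    IsCompactOperator T :=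
  have : ProperSpace V := FiniteDimensional.proper 𝕜 V
  (isCompactOperator_of_locallyCompactSpace_dom (T.codRestrict V hT)).clm_comp V.subtypeL

lemma spectralRadius_eq_zero_of_spectrum_subset_zero {𝕜 𝔸 : Type*} [NormedField 𝕜] [Ring 𝔸]
    [Algebra 𝕜 𝔸] {a : 𝔸} (h : spectrum 𝕜 a ⊆ {0}) : spectralRadius 𝕜 a = 0 := by
  simp only [spectralRadius, ENNReal.iSup_eq_zero, ENNReal.coe_eq_zero, nnnorm_eq_zero]
  exact fun μ hμ ↦ h hμ

section Quasinilpotent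

open Filter Topology

variable {𝔸 : Type*} [NormedRing 𝔸] [NormedAlgebra ℂ 𝔸] [CompleteSpace 𝔸]

lemma eventually_norm_pow_le_of_spectralRadius_eq_zero {a : 𝔸} (h : spectralRadius ℂ a = 0)
    {c : ℝ} (hc : 0 < c) : ∀ᶠ n : ℕ in atTop, ‖a ^ n‖ ≤ c ^ n := by
  have hlt : ∀ᶠ n : ℕ in atTop, ENNReal.ofReal (‖a ^ n‖ ^ (1 / n : ℝ)) < ENNReal.ofReal c :=
    (spectrum.pow_norm_pow_one_div_tendsto_nhds_spectralRadius a).eventually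
      (gt_mem_nhds (h ▸ ENNReal.ofReal_pos.2 hc))
  filter_upwards [hlt, eventually_ne_atTop 0] with n hn hn0
  rw [ENNReal.ofReal_lt_ofReal_iff hc, one_div] at hn
  calc ‖a ^ n‖ = (‖a ^ n‖ ^ (n⁻¹ : ℝ)) ^ n :=
        (Real.rpow_inv_natCast_pow (norm_nonneg _) hn0).symm
    _ ≤ c ^ n := by gcongr

lemma tendsto_pow_mul_norm_pow_of_spectralRadius_eq_zero {a : 𝔸} (h : spectralRadius ℂ a = 0)
    (M : ℝ) : Tendsto (fun n : ℕ ↦ M ^ n * ‖a ^ n‖) atTop (𝓝 0) := by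
  have hc : 0 < (2 * (|M| + 1))⁻¹ := by positivity
  refine squeeze_zero_norm' ?_ (tendsto_pow_atTop_nhds_zero_of_lt_one
    (by norm_num : (0 : ℝ) ≤ 1 / 2) (by norm_num))
  filter_upwards [eventually_norm_pow_le_of_spectralRadius_eq_zero h hc] with n hn
  calc ‖M ^ n * ‖a ^ n‖‖ = |M| ^ n * ‖a ^ n‖ := by
        rw [norm_mul, norm_norm, norm_pow, Real.norm_eq_abs]
    _ ≤ |M| ^ n * (2 * (|M| + 1))⁻¹ ^ n := by gcongr
    _ = (|M| / (2 * (|M| + 1))) ^ n := by rw [← mul_pow, div_eq_mul_inv]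
    _ ≤ (1 / 2) ^ n := by
        refine pow_le_pow_left₀ (by positivity) ?_ n
        rw [div_le_div_iff₀ (by positivity) (by norm_num)]
        linarith [abs_nonneg M]

end Quasinilpotent

lemma ContinuousLinearMap.exists_zero_notMem_closure_image_closedBall {𝕜 X : Type*}
    [NontriviallyNormedField 𝕜] [NormedAddCommGroup X] [NormedSpace 𝕜 X] (K : X →L[𝕜] X)
    {x₀ : X} (hKx₀ : K x₀ ≠ 0) :
    ∃ r, 0 < r ∧ r < ‖x₀‖ ∧ (0 : X) ∉ closure (K '' Metric.closedBall x₀ r) := by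
  obtain ⟨r, hr0, hrK⟩ := exists_pos_mul_lt (norm_pos_iff.2 hKx₀) ‖K‖
  refine ⟨r, hr0, lt_of_mul_lt_mul_left (hrK.trans_le (K.le_opNorm x₀)) (norm_nonneg K), ?_⟩
  have hsub : closure (K '' Metric.closedBall x₀ r) ⊆ Metric.closedBall (K x₀) (‖K‖ * r) := by
    refine closure_minimal ?_ Metric.isClosed_closedBall
    rintro _ ⟨b, hb, rfl⟩
    calc dist (K b) (K x₀) ≤ ‖K‖ * dist b x₀ := K.lipschitz.dist_le_mul b x₀
      _ ≤ ‖K‖ * r := by gcongr; exact hb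
  intro h0
  have := hsub h0
  rw [Metric.mem_closedBall, dist_zero_left] at this
  linarith

section Lomonosov

open Metric

variable {X : Type*} [NormedAddCommGroup X] [NormedSpace ℂ X] [CompleteSpace X]

theorem IsCompactOperator.exists_orbitClosure_centralizer_ne_top_of_spectralRadius_eq_zero
    {K : X →L[ℂ] X} (hK : IsCompactOperator K) (hρ : spectralRadius ℂ K = 0) (hK0 : K ≠ 0) :
    ∃ x ≠ 0, (Subalgebra.centralizer ℂ {K}).orbitClosure x ≠ ⊤ := by
  by_contra! hdense
  obtain ⟨x₀, hKx₀⟩ := ContinuousLinearMap.exists_ne_zero hK0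
  obtain ⟨r, hr0, hrx₀, hQ0⟩ := K.exists_zero_notMem_closure_image_closedBall hKx₀
  set B := closedBall x₀ r
  obtain ⟨S, hS, hSfin, hQS⟩ :=
    (hK.isCompact_closure_image_of_bounded isBounded_closedBall).elim_finite_subcover_image
      (b := (Subalgebra.centralizer ℂ {K} : Set (X →L[ℂ] X))) (c := fun T ↦ T ⁻¹' ball x₀ r)
      (fun T _ ↦ isOpen_ball.preimage T.continuous) fun y hy ↦ by
        obtain ⟨T, hT, hd⟩ := Subalgebra.exists_dist_lt_of_orbitClosure_eq_top
          (hdense y (ne_of_mem_of_not_mem hy hQ0)) x₀ hr0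
        exact Set.mem_iUnion₂.2 ⟨T, hT, hd⟩
  obtain ⟨M, hM⟩ := (hSfin.image norm).bddAbove
  have hB : ∀ b ∈ B, ∃ T ∈ S, T (K b) ∈ B := fun b hb ↦ by
    obtain ⟨T, hT, hTb⟩ := Set.mem_iUnion₂.1 (hQS (subset_closure ⟨b, hb, rfl⟩))
    exact ⟨T, hT, ball_subset_closedBall hTb⟩
  have hlow (n : ℕ) : ‖x₀‖ - r ≤ M ^ n * ‖K ^ n‖ * ‖x₀‖ := by
    obtain ⟨Φ, -, hΦM, hΦB⟩ := exists_mem_centralizer_norm_le_pow_apply_pow_mem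
      (hS.trans (Subalgebra.coe_centralizer ℂ {K}).le) (fun T hT ↦ hM ⟨T, hT, rfl⟩) hB
      (mem_closedBall_self hr0.le) n
    calc ‖x₀‖ - r ≤ ‖Φ ((K ^ n) x₀)‖ := by
          linarith [norm_sub_norm_le x₀ (Φ ((K ^ n) x₀)), mem_closedBall'.1 hΦB,
            dist_eq_norm x₀ (Φ ((K ^ n) x₀))]
      _ ≤ ‖Φ‖ * (‖K ^ n‖ * ‖x₀‖) := Φ.le_opNorm_of_le ((K ^ n).le_opNorm x₀)
      _ ≤ M ^ n * ‖K ^ n‖ * ‖x₀‖ := by rw [mul_assoc]; gcongr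
  have := ge_of_tendsto'
    ((tendsto_pow_mul_norm_pow_of_spectralRadius_eq_zero hρ M).mul_const ‖x₀‖) hlow
  linarith [zero_mul ‖x₀‖]

theorem IsCompactOperator.exists_orbitClosure_centralizer_ne_top
    (hX : ¬ FiniteDimensional ℂ X) {K : X →L[ℂ] X} (hK : IsCompactOperator K) (hK0 : K ≠ 0) :
    ∃ x ≠ 0, (Subalgebra.centralizer ℂ {K}).orbitClosure x ≠ ⊤ := by
  by_contra! hdense
  suffices hρ : spectralRadius ℂ K = 0 by
    obtain ⟨x, hx, hne⟩ :=
      hK.exists_orbitClosure_centralizer_ne_top_of_spectralRadius_eq_zero hρ hK0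
    exact hne (hdense x hx)
  refine spectralRadius_eq_zero_of_spectrum_subset_zero fun μ hμ ↦ by_contra fun hμ0 ↦ hX ?_
  obtain ⟨v, hv⟩ := ((hK.hasEigenvalue_iff_mem_spectrum hμ0).2 hμ).exists_hasEigenvector
  have hKμ := K.eq_smul_one_of_orbitClosure_centralizer_eq_top
    (Module.End.mem_eigenspace_iff.1 hv.1) (hdense v hv.2)
  have hid : (id : X → X) = μ⁻¹ • ⇑K := by
    funext w
    simp [hKμ, smul_smul, inv_mul_cancel₀ hμ0]
  exact FiniteDimensional.of_isCompactOperator_id (hid ▸ hK.smul μ⁻¹)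

end Lomonosov

section HilbertModule

variable {A E : Type*} [CStarAlgebra A] [PartialOrder A] [NormedAddCommGroup E]
  [NormedSpace ℂ E] [SMul Aᵐᵒᵖ E] [CStarModuleOld A E]

local notation "⟪" x ", " y "⟫" => inner (𝕜 := A) x y

namespace CStarModuleOld

lemma inner_sub_right {x y z : E} : ⟪x, y - z⟫ = ⟪x, y⟫ - ⟪x, z⟫ := by
  have h : ⟪x, (-1 : ℂ) • z⟫ = (-1 : ℂ) • ⟪x, z⟫ := CStarModuleOld.inner_smul_right_complex
  rw [neg_one_smul, neg_one_smul] at h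
  rw [sub_eq_add_neg, CStarModuleOld.inner_add_right, h, ← sub_eq_add_neg]

lemma ext_inner_left {u v : E} (h : ∀ w : E, ⟪w, u⟫ = ⟪w, v⟫) : u = v := by
  rw [← sub_eq_zero, ← CStarModuleOld.inner_self (A := A), inner_sub_right, h, sub_self]

lemma op_smul_op_smul (x : E) (a b : A) : (x <• a) <• b = x <• (a * b) :=
  ext_inner_left (A := A) fun w ↦ by simp only [CStarModuleOld.inner_op_smul_right, mul_assoc]

lemma op_smul_one (x : E) : x <• (1 : A) = x :=
  ext_inner_left (A := A) fun w ↦ by rw [CStarModuleOld.inner_op_smul_right, mul_one]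

lemma smul_op_smul_comm (c : ℂ) (x : E) (a : A) : (c • x) <• a = c • (x <• a) :=
  ext_inner_left (A := A) fun w ↦ by
    simp only [CStarModuleOld.inner_op_smul_right, CStarModuleOld.inner_smul_right_complex,
      smul_mul_assoc]

lemma op_smul_complex_smul (c : ℂ) (x : E) (a : A) : x <• (c • a) = c • (x <• a) :=
  ext_inner_left (A := A) fun w ↦ by
    simp only [CStarModuleOld.inner_op_smul_right, CStarModuleOld.inner_smul_right_complex,
      mul_smul_comm]

lemma add_op_smul (x y : E) (a : A) : (x + y) <• a = x <• a + y <• a :=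
  ext_inner_left (A := A) fun w ↦ by
    simp only [CStarModuleOld.inner_op_smul_right, CStarModuleOld.inner_add_right, add_mul]

lemma op_smul_add (x : E) (a b : A) : x <• (a + b) = x <• a + x <• b :=
  ext_inner_left (A := A) fun w ↦ by
    simp only [CStarModuleOld.inner_op_smul_right, CStarModuleOld.inner_add_right, mul_add]

lemma inner_op_smul_left {x y : E} {a : A} : ⟪x <• a, y⟫ = star a * ⟪x, y⟫ := by
  rw [← CStarModuleOld.star_inner y, CStarModuleOld.inner_op_smul_right, star_mul,
    CStarModuleOld.star_inner]

lemma norm_op_smul_le (x : E) (a : A) : ‖x <• a‖ ≤ ‖x‖ * ‖a‖ := by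
  have hsq (y : E) : ‖y‖ ^ 2 = ‖⟪y, y⟫‖ := by
    rw [CStarModuleOld.norm_eq_sqrt_norm_inner_self (A := A) y, Real.sq_sqrt (norm_nonneg _)]
  have hinner : ⟪x <• a, x <• a⟫ = star a * ⟪x, x⟫ * a := by
    rw [CStarModuleOld.inner_op_smul_right, inner_op_smul_left]
  refine le_of_sq_le_sq ?_ (by positivity)
  calc ‖x <• a‖ ^ 2 = ‖star a * ⟪x, x⟫ * a‖ := by rw [hsq, hinner]
    _ ≤ ‖a‖ * ‖x‖ ^ 2 * ‖a‖ := by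
        rw [hsq]
        refine (norm_mul_le _ _).trans ?_
        gcongr
        exact (norm_mul_le _ _).trans_eq (by rw [norm_star])
    _ = (‖x‖ * ‖a‖) ^ 2 := by ring

noncomputable def opSMulCLM (a : A) : E →L[ℂ] E :=
  LinearMap.mkContinuous
    { toFun := fun x ↦ x <• a
      map_add' := fun x y ↦ add_op_smul x y a
      map_smul' := fun c x ↦ smul_op_smul_comm c x a } ‖a‖
    fun x ↦ (norm_op_smul_le x a).trans_eq (mul_comm _ _)

lemma mem_centralizer_of_rankOne {S : E →L[ℂ] E} {x y : E} (hS : ∀ z, S z = x <• ⟪y, z⟫) :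
    S ∈ Set.centralizer (Set.range (opSMulCLM (A := A) (E := E))) := by
  rintro _ ⟨a, rfl⟩
  ext z
  change S z <• a = S (z <• a)
  rw [hS, hS, CStarModuleOld.inner_op_smul_right, op_smul_op_smul]

lemma isCompactOperator_of_rankOne [FiniteDimensional ℂ A] {S : E →L[ℂ] E} {x y : E}
    (hS : ∀ z, S z = x <• ⟪y, z⟫) : IsCompactOperator S := by
  let φ : A →ₗ[ℂ] E :=
    { toFun := fun a ↦ x <• a
      map_add' := op_smul_add x
      map_smul' := fun c a ↦ op_smul_complex_smul c x a }
  exact S.isCompactOperator_of_forall_apply_mem (LinearMap.range φ)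
    fun z ↦ ⟨⟪y, z⟫, (hS z).symm⟩

end CStarModuleOld

open CStarModuleOld

lemma IsCompactOp.mem_centralizer {K : E →L[ℂ] E} (hK : IsCompactOp (A := A) K) :
    K ∈ Set.centralizer (Set.range (opSMulCLM (A := A) (E := E))) := by
  refine closure_minimal ?_ (Set.isClosed_centralizer _) hK
  rw [← Subalgebra.coe_centralizer ℂ]
  refine Submodule.span_le (p := (Subalgebra.centralizer ℂ _).toSubmodule).2 ?_
  rintro S ⟨x, y, hS⟩
  exact mem_centralizer_of_rankOne hS

lemma IsCompactOp.isCompactOperator [FiniteDimensional ℂ A] [CompleteSpace E] {K : E →L[ℂ] E}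
    (hK : IsCompactOp (A := A) K) : IsCompactOperator K :=
  closure_minimal (Submodule.span_le (p := compactOperator (RingHom.id ℂ) E E).2 <| by
    rintro S ⟨x, y, hS⟩
    exact isCompactOperator_of_rankOne hS) isClosed_setOfPred_isCompactOperator hK

lemma isFinGen_of_finiteDimensional [FiniteDimensional ℂ E] : IsFinGen (A := A) (E := E) := by
  obtain ⟨n, s, hs⟩ := Module.Finite.exists_fin (R := ℂ) (M := E)
  refine ⟨n, s, fun x ↦ Submodule.span_mono ?_ (hs ▸ Submodule.mem_top : x ∈ _)⟩
  rintro _ ⟨i, rfl⟩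
  exact ⟨i, 1, (op_smul_one (s i)).symm⟩

lemma isClosedSubmodule_orbitClosure {K : E →L[ℂ] E}
    (hK : K ∈ Set.centralizer (Set.range (opSMulCLM (A := A) (E := E)))) (x : E) :
    IsClosedSubmodule (A := A) ((Subalgebra.centralizer ℂ {K}).orbitClosure x) := by
  refine ⟨Subalgebra.isClosed_orbitClosure x, fun a w hw ↦ ?_⟩
  have ha : opSMulCLM a ∈ Subalgebra.centralizer ℂ {K} := by
    rintro _ rfl
    exact (hK _ ⟨a, rfl⟩).symm
  exact Subalgebra.map_mem_orbitClosure ha hw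

end HilbertModule

section

variable {A : Type*} [CStarAlgebra A] [PartialOrder A] [StarOrderedRing A]
variable {E : Type*} [NormedAddCommGroup E] [NormedSpace ℂ E] [SMul Aᵐᵒᵖ E]
  [CStarModuleOld A E] [CompleteSpace E]

/-- Lomonosov-type theorem: over a finite dimensional C*-algebra, if `E` is not finitely
generated, then every nonzero compact operator `K` on `E` has a proper nonzero hyperinvariant
closed submodule. -/
theorem stmt19 [FiniteDimensional ℂ A] (hfg : ¬ IsFinGen (A := A) (E := E))
    (K : E →L[ℂ] E) (hK : IsCompactOp (A := A) K) (hK0 : K ≠ 0) :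
    ∃ W : Submodule ℂ E, IsClosedSubmodule (A := A) W ∧ W ≠ ⊥ ∧ W ≠ ⊤ ∧
      ∀ S S' : E →L[ℂ] E, IsAdjointableWith (A := A) S S' → S.comp K = K.comp S →
        ∀ x ∈ W, S x ∈ W := by
  have hE : ¬ FiniteDimensional ℂ E := fun _ ↦ hfg isFinGen_of_finiteDimensional
  obtain ⟨x, hx0, hxW⟩ := hK.isCompactOperator.exists_orbitClosure_centralizer_ne_top hE hK0
  refine ⟨_, isClosedSubmodule_orbitClosure hK.mem_centralizer x, ?_, hxW, ?_⟩
  · rw [Ne, Submodule.eq_bot_iff]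
    exact fun h ↦ hx0 (h x (Subalgebra.mem_orbitClosure_self x))
  · intro S _ _ hSK w hw
    refine Subalgebra.map_mem_orbitClosure ?_ hw
    rintro _ rfl
    exact hSK.symm

end
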